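/- arXiv:1508.03959 — 6 statements merged into one kernel-verified Lean document; each statement's English description precedes it below -/
import Mathlib

section
/- Consider smooth maps f_x : ℝ^{n_x} × ℝ^{n_y} × ℝ^m → ℝ^{n_x}, f_y : ℝ^{n_x} × ℝ^{n_y} × ℝ^m → ℝ^{n_y}, a continuous input u : ℝ → ℝ^m, and differentiable curves x : ℝ → ℝ^{n_x}, y : ℝ → ℝ^{n_y} satisfying x'(t) = f_x(x(t),y(t),u(t)) and y'(t) = f_y(x(t),y(t),u(t)) for all t ≥ 0. Suppose there exist a differentiable map φ : ℝ^{n_x} × ℝ^{n_y} → ℝ^{n_z}, a map φ^L : ℝ^{n_z} × ℝ^{n_y} → ℝ^{n_x}, and a map h : ℝ^{n_y} × ℝ^m → ℝ^{n_z} such that (i) φ^L(φ(x,y),y) = x for all x, y, and (ii) Dφ(x,y)·(f_x(x,y,u), f_y(x,y,u)) = h(y,u) for all x, y, u. Then for any differentiable χ : ℝ → ℝ^{n_z} with χ'(t) = h(y(t),u(t)) for all t ≥ 0, setting θ := φ(x(0),y(0)) − χ(0), one has for all t ≥ 0: x(t) = φ^L(χ(t) + θ, y(t)) and y'(t) = f_y(φ^L(χ(t)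 + θ, y(t)), y(t), u(t)). -/
/-- **Proposition 1 (PEBO re-parametrization).**
Consider the system `ẋ = f_x(x,y,u)`, `ẏ = f_y(x,y,u)` along a continuous input `u`.
Suppose there are maps `φ`, `φL`, `h` with `φL(φ(x,y),y) = x` (left invertibility) and
`Dφ(x,y)·(f_x(x,y,u), f_y(x,y,u)) = h(y,u)` (transformability into cascade form).
Then for any dynamic extension `χ̇ = h(y,u)`, with `θ := φ(x(0),y(0)) − χ(0)`, one has for
all `t ≥ 0` that `x(t) = φL(χ(t)+θ, y(t))` and `ẏ(t) = f_y(φL(χ(t)+θ, y(t)), y(t), u(t))`. -/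
theorem stmt0 {nx ny m nz : ℕ}
    (fx : (Fin nx → ℝ) → (Fin ny → ℝ) → (Fin m → ℝ) → (Fin nx → ℝ))
    (fy : (Fin nx → ℝ) → (Fin ny → ℝ) → (Fin m → ℝ) → (Fin ny → ℝ))
    (hfx : ContDiff ℝ (⊤ : ℕ∞) fun p : (Fin nx → ℝ) × (Fin ny → ℝ) × (Fin m → ℝ) =>
      fx p.1 p.2.1 p.2.2)
    (hfy : ContDiff ℝ (⊤ : ℕ∞) fun p : (Fin nx → ℝ) × (Fin ny → ℝ) × (Fin m → ℝ) =>
      fy p.1 p.2.1 p.2.2)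
    (u : ℝ → Fin m → ℝ) (hu : Continuous u)
    (x : ℝ → Fin nx → ℝ) (y : ℝ → Fin ny → ℝ)
    (hx : ∀ t : ℝ, 0 ≤ t → HasDerivAt x (fx (x t) (y t) (u t)) t)
    (hy : ∀ t : ℝ, 0 ≤ t → HasDerivAt y (fy (x t) (y t) (u t)) t)
    (φ : (Fin nx → ℝ) × (Fin ny → ℝ) → (Fin nz → ℝ))
    (Dφ : (Fin nx → ℝ) × (Fin ny → ℝ) →
      ((Fin nx → ℝ) × (Fin ny → ℝ)) →L[ℝ] (Fin nz → ℝ))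
    (hφdiff : ∀ p, HasFDerivAt φ (Dφ p) p)
    (φL : (Fin nz → ℝ) → (Fin ny → ℝ) → (Fin nx → ℝ))
    (h : (Fin ny → ℝ) → (Fin m → ℝ) → (Fin nz → ℝ))
    (hleft : ∀ (xv : Fin nx → ℝ) (yv : Fin ny → ℝ), φL (φ (xv, yv)) yv = xv)
    (hcascade : ∀ (xv : Fin nx → ℝ) (yv : Fin ny → ℝ) (uv : Fin m → ℝ),
      Dφ (xv, yv) (fx xv yv uv, fy xv yv uv) = h yv uv)
    (χ : ℝ → Fin nz → ℝ)
    (hχ : ∀ t : ℝ, 0 ≤ t → HasDerivAt χ (h (y t) (u t)) t)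
    (θ : Fin nz → ℝ) (hθ : θ = φ (x 0, y 0) - χ 0) :
    ∀ t : ℝ, 0 ≤ t →
      x t = φL (χ t + θ) (y t) ∧
      HasDerivAt y (fy (φL (χ t + θ) (y t)) (y t) (u t)) t := by
  have key : ∀ t : ℝ, 0 ≤ t → φ (x t, y t) = χ t + θ := by
    intro t ht
    set g : ℝ → Fin nz → ℝ := fun s => φ (x s, y s) - χ s with hg
    have hgd : ∀ s ∈ Set.Ici (0:ℝ), HasDerivWithinAt g 0 (Set.Ici (0:ℝ)) s := by
      intro s hs
      have hs' : (0:ℝ) ≤ s := hs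
      have h1 : HasDerivAt (fun s => φ (x s, y s))
          (Dφ (x s, y s) (fx (x s) (y s) (u s), fy (x s) (y s) (u s))) s :=
        (hφdiff (x s, y s)).comp_hasDerivAt s ((hx s hs').prodMk (hy s hs'))
      rw [hcascade] at h1
      have h2 : HasDerivAt g (h (y s) (u s) - h (y s) (u s)) s := h1.sub (hχ s hs')
      simpa using h2.hasDerivWithinAt
    have hcst := (convex_Ici (0:ℝ)).norm_image_sub_le_of_norm_hasDerivWithin_le
      hgd (C := 0) (fun s hs => by simp) Set.self_mem_Ici ht
    have : g t = g 0 := by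
      have := hcst
      simp at this
      exact sub_eq_zero.mp (by simpa [norm_eq_zero] using this)
    have hg0 : g 0 = θ := by simp [hg, hθ]
    have : φ (x t, y t) - χ t = θ := this.trans hg0
    linear_combination (norm := module) this
  intro t ht
  have hx' : φL (χ t + θ) (y t) = x t := by
    rw [← key t ht, hleft]
  exact ⟨hx'.symm, by rw [hx']; exact hy t ht⟩
end

section
/- Consider the LTI system ẋ(t) = A11 x(t) + A12 y(t) + B1 u(t), ẏ(t) = A21 x(t) + A22 y(t) + B2 u(t) along a continuous input u, with differentiable x : ℝ → ℝ^{n_x}, y : ℝ → ℝ^{n_y}. Let T1 ∈ ℝ^{n_z × n_x} have rank n_x, let T2 ∈ ℝ^{n_z × n_y} satisfy T1 A11 + T2 A21 = 0, and let χ : ℝ → ℝ^{n_z} be differentiable with χ'(t) = (T1 A12 + T2 A22) y(t) + (T1 B1 + T2 B2) u(t). Set T1† := (T1ᵀT1)⁻¹T1ᵀ and θ := T1 x(0) + T2 y(0) − χ(0). Then for all t ≥ 0: y'(t) = A21 T1† χ(t) + (A22 − A21 T1† T2) y(t) + B2 u(t) + A21 T1† θ. -/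
/-!
Along every trajectory, `z = T1 x + T2 y - χ` has derivative `(T1 A11 + T2 A21) x = 0`, so it
stays equal to its initial value `θ`. Since `T1` has full column rank, `T1ᵀ T1` is invertible and
`T1† = (T1ᵀ T1)⁻¹ T1ᵀ` is a left inverse of `T1`; hence `x = T1† (θ + χ - T2 y)`, and substituting
this into `ẏ = A21 x + A22 y + B2 u` gives the regression form.
-/

open Matrix

namespace Matrix

variable {K m n : Type*} [Field K] [Fintype m] [Fintype n] [DecidableEq n]

theorem isUnit_of_rank_eq_card {A : Matrix n n K} (h : A.rank = Fintype.card n) : IsUnit A := by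
  rw [← mulVec_surjective_iff_isUnit]
  refine (LinearMap.range_eq_top (f := A.mulVecLin)).mp (Submodule.eq_top_of_finrank_eq ?_)
  rw [← rank, h, Module.finrank_fintype_fun_eq_card]

variable [LinearOrder K] [IsStrictOrderedRing K]

theorem isUnit_transpose_mul_self_of_rank_eq_card {A : Matrix m n K}
    (h : A.rank = Fintype.card n) : IsUnit (Aᵀ * A) :=
  isUnit_of_rank_eq_card (by rw [rank_transpose_mul_self, h])

theorem inv_transpose_mul_self_mul_transpose_mul_self {A : Matrix m n K}
    (h : A.rank = Fintype.card n) : (Aᵀ * A)⁻¹ * Aᵀ * A = 1 := by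
  rw [Matrix.mul_assoc, nonsing_inv_mul _
    ((isUnit_iff_isUnit_det _).mp (isUnit_transpose_mul_self_of_rank_eq_card h))]

end Matrix

theorem HasDerivAt.matrix_mulVec {𝕜 m n : Type*} [NontriviallyNormedField 𝕜]
    [CompleteSpace 𝕜] [Fintype m] [Fintype n] (M : Matrix m n 𝕜) {f : 𝕜 → n → 𝕜} {f' : n → 𝕜}
    {t : 𝕜} (hf : HasDerivAt f f' t) : HasDerivAt (fun s => M *ᵥ f s) (M *ᵥ f') t :=
  M.mulVecLin.toContinuousLinearMap.hasFDerivAt.comp_hasDerivAt t hf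

theorem lti_mulVec_add_mulVec_sub_eq_initial {ιx ιy ιz ιu : Type*} [Fintype ιx] [Fintype ιy]
    [Fintype ιz] [Fintype ιu]
    {A11 : Matrix ιx ιx ℝ} {A12 : Matrix ιx ιy ℝ} {A21 : Matrix ιy ιx ℝ} {A22 : Matrix ιy ιy ℝ}
    {B1 : Matrix ιx ιu ℝ} {B2 : Matrix ιy ιu ℝ} {u : ℝ → ιu → ℝ} {x : ℝ → ιx → ℝ}
    {y : ℝ → ιy → ℝ} {T1 : Matrix ιz ιx ℝ} {T2 : Matrix ιz ιy ℝ} {χ : ℝ → ιz → ℝ}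
    (hx : ∀ t, HasDerivAt x (A11 *ᵥ x t + A12 *ᵥ y t + B1 *ᵥ u t) t)
    (hy : ∀ t, HasDerivAt y (A21 *ᵥ x t + A22 *ᵥ y t + B2 *ᵥ u t) t)
    (halg : T1 * A11 + T2 * A21 = 0)
    (hχ : ∀ t, HasDerivAt χ ((T1 * A12 + T2 * A22) *ᵥ y t + (T1 * B1 + T2 * B2) *ᵥ u t) t)
    (t : ℝ) : T1 *ᵥ x t + T2 *ᵥ y t - χ t = T1 *ᵥ x 0 + T2 *ᵥ y 0 - χ 0 := by
  have hz : ∀ s, HasDerivAt (fun s => T1 *ᵥ x s + T2 *ᵥ y s - χ s) 0 s := by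
    intro s
    have h := (((hx s).matrix_mulVec T1).add ((hy s).matrix_mulVec T2)).sub (hχ s)
    have hcancel : T1 *ᵥ (A11 *ᵥ x s + A12 *ᵥ y s + B1 *ᵥ u s) +
        T2 *ᵥ (A21 *ᵥ x s + A22 *ᵥ y s + B2 *ᵥ u s) -
        ((T1 * A12 + T2 * A22) *ᵥ y s + (T1 * B1 + T2 * B2) *ᵥ u s) =
        (T1 * A11 + T2 * A21) *ᵥ x s := by
      simp only [mulVec_add, mulVec_mulVec, add_mulVec]
      abel
    rwa [hcancel, halg, zero_mulVec] at h
  exact is_const_of_deriv_eq_zero (fun s => (hz s).differentiableAt) (fun s => (hz s).deriv) t 0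

theorem stmt6_general {nx ny nz m : ℕ}
    (A11 : Matrix (Fin nx) (Fin nx) ℝ) (A12 : Matrix (Fin nx) (Fin ny) ℝ)
    (A21 : Matrix (Fin ny) (Fin nx) ℝ) (A22 : Matrix (Fin ny) (Fin ny) ℝ)
    (B1 : Matrix (Fin nx) (Fin m) ℝ) (B2 : Matrix (Fin ny) (Fin m) ℝ)
    (u : ℝ → Fin m → ℝ)
    (x : ℝ → Fin nx → ℝ) (y : ℝ → Fin ny → ℝ)
    (hx : ∀ t : ℝ, HasDerivAt x (A11 *ᵥ x t + A12 *ᵥ y t + B1 *ᵥ u t) t)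
    (hy : ∀ t : ℝ, HasDerivAt y (A21 *ᵥ x t + A22 *ᵥ y t + B2 *ᵥ u t) t)
    (T1 : Matrix (Fin nz) (Fin nx) ℝ) (T2 : Matrix (Fin nz) (Fin ny) ℝ)
    (hrank : T1.rank = nx) (halg : T1 * A11 + T2 * A21 = 0)
    (χ : ℝ → Fin nz → ℝ)
    (hχ : ∀ t : ℝ,
      HasDerivAt χ ((T1 * A12 + T2 * A22) *ᵥ y t + (T1 * B1 + T2 * B2) *ᵥ u t) t)
    (T1d : Matrix (Fin nx) (Fin nz) ℝ) (hT1d : T1d = (T1ᵀ * T1)⁻¹ * T1ᵀ)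
    (θ : Fin nz → ℝ) (hθ : θ = T1 *ᵥ x 0 + T2 *ᵥ y 0 - χ 0) :
    ∀ t : ℝ, 0 ≤ t →
      HasDerivAt y
        (A21 *ᵥ (T1d *ᵥ χ t) + (A22 - A21 * T1d * T2) *ᵥ y t + B2 *ᵥ u t +
          A21 *ᵥ (T1d *ᵥ θ)) t := by
  intro t _
  have hleft : T1d * T1 = 1 :=
    hT1d ▸ inv_transpose_mul_self_mul_transpose_mul_self (by rw [hrank, Fintype.card_fin])
  have hz : T1 *ᵥ x t = θ + χ t - T2 *ᵥ y t := by
    rw [hθ, ← lti_mulVec_add_mulVec_sub_eq_initial hx hy halg hχ t]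
    abel
  have hxt : x t = T1d *ᵥ (θ + χ t - T2 *ᵥ y t) := by
    rw [← hz, mulVec_mulVec, hleft, one_mulVec]
  convert hy t using 1
  rw [hxt]
  simp only [mulVec_add, mulVec_sub, sub_mulVec, mulVec_mulVec, Matrix.mul_assoc]
  abel

/-- **Linear regression form of the output for LTI systems (claim (C3) of Proposition 2).**
Along trajectories of the LTI system, if `rank T1 = nx`, `T1 A11 + T2 A21 = 0`, and
`χ̇ = (T1 A12 + T2 A22) y + (T1 B1 + T2 B2) u`, then with `T1† := (T1ᵀT1)⁻¹T1ᵀ` and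
`θ := T1 x(0) + T2 y(0) − χ(0)` one has, for all `t ≥ 0`,
`ẏ(t) = A21 T1† χ(t) + (A22 − A21 T1† T2) y(t) + B2 u(t) + A21 T1† θ`. -/
theorem stmt6 {nx ny nz m : ℕ}
    (A11 : Matrix (Fin nx) (Fin nx) ℝ) (A12 : Matrix (Fin nx) (Fin ny) ℝ)
    (A21 : Matrix (Fin ny) (Fin nx) ℝ) (A22 : Matrix (Fin ny) (Fin ny) ℝ)
    (B1 : Matrix (Fin nx) (Fin m) ℝ) (B2 : Matrix (Fin ny) (Fin m) ℝ)
    (u : ℝ → Fin m → ℝ) (hu : Continuous u)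
    (x : ℝ → Fin nx → ℝ) (y : ℝ → Fin ny → ℝ)
    (hx : ∀ t : ℝ, HasDerivAt x (A11 *ᵥ x t + A12 *ᵥ y t + B1 *ᵥ u t) t)
    (hy : ∀ t : ℝ, HasDerivAt y (A21 *ᵥ x t + A22 *ᵥ y t + B2 *ᵥ u t) t)
    (T1 : Matrix (Fin nz) (Fin nx) ℝ) (T2 : Matrix (Fin nz) (Fin ny) ℝ)
    (hrank : T1.rank = nx) (halg : T1 * A11 + T2 * A21 = 0)
    (χ : ℝ → Fin nz → ℝ)
    (hχ : ∀ t : ℝ,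
      HasDerivAt χ ((T1 * A12 + T2 * A22) *ᵥ y t + (T1 * B1 + T2 * B2) *ᵥ u t) t)
    (T1d : Matrix (Fin nx) (Fin nz) ℝ) (hT1d : T1d = (T1ᵀ * T1)⁻¹ * T1ᵀ)
    (θ : Fin nz → ℝ) (hθ : θ = T1 *ᵥ x 0 + T2 *ᵥ y 0 - χ 0) :
    ∀ t : ℝ, 0 ≤ t →
      HasDerivAt y
        (A21 *ᵥ (T1d *ᵥ χ t) + (A22 - A21 * T1d * T2) *ᵥ y t + B2 *ᵥ u t +
          A21 *ᵥ (T1d *ᵥ θ)) t :=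
  stmt6_general A11 A12 A21 A22 B1 B2 u x y hx hy T1 T2 hrank halg χ hχ T1d hT1d θ hθ
end

section
/- Let s, m ∈ ℕ, let M : ℝ^s → ℝ^{s×s} be a smooth map with M(y) positive definite for all y, let V : ℝ^s → ℝ be smooth, let G : ℝ^s → ℝ^{s×m} be continuous, and let T : ℝ^s → ℝ^{s×s} be a smooth map with T(y) invertible for all y. Assume the PLvCC condition: for all y, x ∈ ℝ^s, Σ_{j=1}^s (∂(Tᵀ)/∂y_j)(y) x · (M(y)⁻¹ x)_j = ½ Tᵀ(y) ∇_y(xᵀ M(y)⁻¹ x) (where the gradient is taken with x frozen). Then along any solution of ẏ = M(y)⁻¹ x, ẋ = −½ ∇_y(xᵀ M(y)⁻¹ x) − ∇V(y) + G(y) u(t) with continuous u : ℝ → ℝ^m, the curve z(t) := Tᵀ(y(t)) x(t) satisfies ż(t) = −Tᵀ(y(t))(∇V(y(t)) − G(y(t)) u(t)) and ẏ(t) = (Tᵀ(y(t)) M(y(t)))⁻¹ z(t). -/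
open Matrix

/-- The Euclidean gradient of a scalar function on `ℝ^s`, as the vector of partial
derivatives. -/
noncomputable def euclGrad {s : ℕ} (Q : (Fin s → ℝ) → ℝ) (y : Fin s → ℝ) : Fin s → ℝ :=
  fun j => fderiv ℝ Q y (Pi.single j 1)

/-- **Proposition 3, claims (i) and (ii): PLvCC mechanical systems.**
Consider the Hamiltonian system `ẏ = M(y)⁻¹x`, `ẋ = −½∇_y(xᵀM(y)⁻¹x) − ∇V(y) + G(y)u(t)`
with `M(y)` positive definite and `T(y)` invertible. Under the PLvCC condition
`Σ_j (∂(Tᵀ)/∂y_j)(y)x · (M(y)⁻¹x)_j = ½ Tᵀ(y) ∇_y(xᵀM(y)⁻¹x)` (with `x` frozen),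
the curve `z(t) := Tᵀ(y(t)) x(t)` satisfies `ż = −Tᵀ(y)(∇V(y) − G(y)u)` and
`ẏ = (Tᵀ(y)M(y))⁻¹ z`. -/
theorem stmt7 {s m : ℕ}
    (M : (Fin s → ℝ) → Matrix (Fin s) (Fin s) ℝ)
    (hMsmooth : ∀ i j, ContDiff ℝ (⊤ : ℕ∞) fun y => M y i j)
    (hMpd : ∀ y, (M y).PosDef)
    (V : (Fin s → ℝ) → ℝ) (hV : ContDiff ℝ (⊤ : ℕ∞) V)
    (G : (Fin s → ℝ) → Matrix (Fin s) (Fin m) ℝ)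
    (hG : ∀ i j, Continuous fun y => G y i j)
    (T : (Fin s → ℝ) → Matrix (Fin s) (Fin s) ℝ)
    (hTsmooth : ∀ i j, ContDiff ℝ (⊤ : ℕ∞) fun y => T y i j)
    (hTinv : ∀ y, IsUnit (T y))
    (hPLvCC : ∀ (y x : Fin s → ℝ),
      (∑ j : Fin s, ((M y)⁻¹ *ᵥ x) j •
          fderiv ℝ (fun y' => (T y')ᵀ *ᵥ x) y (Pi.single j 1)) =
        (1 / 2 : ℝ) • ((T y)ᵀ *ᵥ euclGrad (fun y' => x ⬝ᵥ ((M y')⁻¹ *ᵥ x)) y))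
    (u : ℝ → Fin m → ℝ) (hu : Continuous u)
    (y x : ℝ → Fin s → ℝ)
    (hy : ∀ t : ℝ, HasDerivAt y ((M (y t))⁻¹ *ᵥ x t) t)
    (hx : ∀ t : ℝ, HasDerivAt x
      (-(1 / 2 : ℝ) • euclGrad (fun y' => x t ⬝ᵥ ((M y')⁻¹ *ᵥ x t)) (y t) -
        euclGrad V (y t) + G (y t) *ᵥ u t) t) :
    ∀ t : ℝ,
      HasDerivAt (fun τ => (T (y τ))ᵀ *ᵥ x τ)
        (-((T (y t))ᵀ *ᵥ (euclGrad V (y t) - G (y t) *ᵥ u t))) t ∧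
      HasDerivAt y (((T (y t))ᵀ * M (y t))⁻¹ *ᵥ ((T (y t))ᵀ *ᵥ x t)) t := by
  intro t
  have hTu : IsUnit ((T (y t))ᵀ).det := by
    rw [Matrix.det_transpose]
    exact (Matrix.isUnit_iff_isUnit_det _).mp (hTinv (y t))
  have key : ((T (y t))ᵀ * M (y t))⁻¹ *ᵥ ((T (y t))ᵀ *ᵥ x t) = (M (y t))⁻¹ *ᵥ x t := by
    rw [Matrix.mulVec_mulVec, Matrix.mul_inv_rev, Matrix.mul_assoc,
      Matrix.nonsing_inv_mul _ hTu, Matrix.mul_one]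
  refine ⟨?_, by rw [key]; exact hy t⟩
  -- abbreviations
  set vt : Fin s → ℝ := (M (y t))⁻¹ *ᵥ x t with hvt
  set dx : Fin s → ℝ :=
    -(1 / 2 : ℝ) • euclGrad (fun y' => x t ⬝ᵥ ((M y')⁻¹ *ᵥ x t)) (y t) -
      euclGrad V (y t) + G (y t) *ᵥ u t with hdx
  -- partial derivatives of T
  have hTdiff : ∀ k i, DifferentiableAt ℝ (fun y' => T y' k i) (y t) := fun k i =>
    ((hTsmooth k i).differentiable (by simp)).differentiableAt
  set L : Fin s → Fin s → ((Fin s → ℝ) →L[ℝ] ℝ) :=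
    fun k i => fderiv ℝ (fun y' => T y' k i) (y t) with hL
  have hTfd : ∀ k i, HasFDerivAt (fun y' => T y' k i) (L k i) (y t) := fun k i =>
    (hTdiff k i).hasFDerivAt
  -- the full derivative of y' ↦ Tᵀ(y') x(t)
  have hΦ : HasFDerivAt (fun y' => (T y')ᵀ *ᵥ x t)
      (ContinuousLinearMap.pi fun i => ∑ k, x t k • L k i) (y t) := by
    have hfun : (fun y' => (T y')ᵀ *ᵥ x t) =
        (fun y' i => ∑ k, T y' k i * x t k) := by
      funext y' i
      simp [Matrix.mulVec, dotProduct, Matrix.transpose_apply]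
    rw [hfun]
    exact hasFDerivAt_pi.mpr fun i =>
      HasFDerivAt.fun_sum fun k _ => (hTfd k i).mul_const (x t k)
  -- rewrite the PLvCC hypothesis
  have hP := hPLvCC (y t) (x t)
  rw [hΦ.fderiv] at hP
  -- decompose each vector as a combination of basis vectors
  have hbasis : ∀ v : Fin s → ℝ, v = ∑ j : Fin s, v j • (Pi.single j 1 : Fin s → ℝ) := by
    intro v
    funext r
    simp [Pi.single_apply, Finset.sum_ite_eq', mul_comm]
  -- key cancellation identity, componentwise
  have hcancel : ∀ i : Fin s,
      (∑ k, L k i vt * x t k) =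
        ((1 / 2 : ℝ) • ((T (y t))ᵀ *ᵥ
          euclGrad (fun y' => x t ⬝ᵥ ((M y')⁻¹ *ᵥ x t)) (y t))) i := by
    intro i
    have hPi := congrFun hP i
    simp only [Finset.sum_apply, Pi.smul_apply, smul_eq_mul,
      ContinuousLinearMap.pi_apply, ContinuousLinearMap.sum_apply,
      ContinuousLinearMap.smul_apply] at hPi
    rw [← hvt] at hPi
    rw [Pi.smul_apply, smul_eq_mul, ← hPi]
    have hLv : ∀ k, L k i vt = ∑ j, vt j * L k i (Pi.single j 1) := by
      intro k
      conv_lhs => rw [hbasis vt]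
      rw [map_sum]
      simp [smul_eq_mul]
    calc (∑ k, L k i vt * x t k)
        = ∑ k, ∑ j, vt j * L k i (Pi.single j 1) * x t k := by
          simp_rw [hLv, Finset.sum_mul]
      _ = ∑ j, vt j * ∑ k, x t k * L k i (Pi.single j 1) := by
          rw [Finset.sum_comm]
          refine Finset.sum_congr rfl fun j _ => ?_
          rw [Finset.mul_sum]
          refine Finset.sum_congr rfl fun k _ => ?_
          ring
  -- derivative of each component of z
  refine hasDerivAt_pi.mpr fun i => ?_
  have hzi : HasDerivAt (fun τ => ∑ k, T (y τ) k i * x τ k)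
      (∑ k, (L k i vt * x t k + T (y t) k i * dx k)) t := by
    refine HasDerivAt.fun_sum fun k _ => ?_
    exact ((hTfd k i).comp_hasDerivAt t (hy t)).mul (hasDerivAt_pi.mp (hx t) k)
  have hfun2 : (fun τ => ((T (y τ))ᵀ *ᵥ x τ) i) =
      (fun τ => ∑ k, T (y τ) k i * x τ k) := by
    funext τ
    simp [Matrix.mulVec, dotProduct, Matrix.transpose_apply]
  rw [hfun2]
  refine hzi.congr_deriv ?_
  rw [Finset.sum_add_distrib, hcancel i]
  have hTdx : (∑ k, T (y t) k i * dx k) = ((T (y t))ᵀ *ᵥ dx) i := by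
    simp [Matrix.mulVec, dotProduct, Matrix.transpose_apply]
  rw [hTdx, hdx]
  simp only [Matrix.mulVec_add, Matrix.mulVec_sub, Matrix.mulVec_smul,
    Pi.add_apply, Pi.sub_apply, Pi.smul_apply, Pi.neg_apply, smul_eq_mul,
    Matrix.mulVec_neg, Matrix.neg_mulVec]
  ring
end

section
/- Let L > 0, R ≥ 0, λ_m > 0, n_p > 0, and let J = [[0, −1], [1, 0]]. Let i : ℝ → ℝ², q : ℝ → ℝ, u : ℝ → ℝ² with i, q differentiable and u continuous, and define λ(t) := L i(t) + λ_m (cos(n_p q(t)), sin(n_p q(t))). Assume λ'(t) = −R i(t) + u(t) for all t ≥ 0, and let χ : ℝ → ℝ² be differentiable with χ'(t) = −R i(t) + u(t). Set θ := λ(0) − χ(0). Then for all t ≥ 0: i'(t) = (1/L) [ −R i(t) + u(t) − n_p q'(t) · J (χ(t) + θ − L i(t)) ]; in particular i'(t) is an affine function of θ with regressor matrix −(n_p q'(t)/L) J. -/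
open Matrix Real

/-!
The flux `λ = L i + λ_m (cos (n_p q), sin (n_p q))` and the extended state `χ` obey the same
differential equation on `t ≥ 0`, so `λ(t) = χ(t) + θ` there. The magnet term rotates with the
rotor, so its derivative is `n_p q̇ J` applied to it, and that term equals `λ - L i = χ + θ - L i`.
Solving `λ̇ = L i̇ + n_p q̇ J (λ - L i)` for `i̇` gives the claim.
-/

theorem sub_eq_sub_of_hasDerivAt_eq {E : Type*} [NormedAddCommGroup E] [NormedSpace ℝ E]
    {f g f' : ℝ → E} {a t : ℝ} (hf : ∀ s, a ≤ s → HasDerivAt f (f' s) s)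
    (hg : ∀ s, a ≤ s → HasDerivAt g (f' s) s) (ht : a ≤ t) :
    f t - g t = f a - g a := by
  have hderiv : ∀ s, a ≤ s → HasDerivAt (f - g) 0 s := fun s hs => by
    simpa only [sub_self] using (hf s hs).sub (hg s hs)
  exact constant_of_has_deriv_right_zero
    (fun s hs => (hderiv s hs.1).continuousAt.continuousWithinAt)
    (fun s hs => (hderiv s hs.1).hasDerivWithinAt) t ⟨ht, le_rfl⟩

theorem rotation_generator_mulVec (a b : ℝ) :
    (!![0, -1; 1, 0] : Matrix (Fin 2) (Fin 2) ℝ) *ᵥ ![a, b] = ![-b, a] := by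
  ext j
  fin_cases j <;> simp [mulVec, dotProduct, Fin.sum_univ_two]

theorem HasDerivAt.cos_sin {f : ℝ → ℝ} {f' t : ℝ} (hf : HasDerivAt f f' t) :
    HasDerivAt (fun s => ![Real.cos (f s), Real.sin (f s)])
      (f' • ((!![0, -1; 1, 0] : Matrix (Fin 2) (Fin 2) ℝ) *ᵥ
        ![Real.cos (f t), Real.sin (f t)])) t := by
  rw [rotation_generator_mulVec, hasDerivAt_pi]
  intro j
  fin_cases j
  · simpa [mul_comm] using hf.cos
  · simpa [mul_comm] using hf.sin

theorem HasDerivAt.of_smul_add_left {E : Type*} [NormedAddCommGroup E] [NormedSpace ℝ E]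
    {x y z : ℝ → E} {y' z' : E} {c : ℝ} {t : ℝ} (hc : c ≠ 0)
    (hz : ∀ s, z s = c • x s + y s) (hz' : HasDerivAt z z' t) (hy' : HasDerivAt y y' t) :
    HasDerivAt x (c⁻¹ • (z' - y')) t := by
  have hx : x = fun s => c⁻¹ • (z s - y s) := by
    funext s
    rw [hz, add_sub_cancel_right, inv_smul_smul₀ hc]
  rw [hx]
  exact (hz'.sub hy').const_smul c⁻¹

theorem stmt11_general (L R lm np : ℝ) (hL : 0 < L)
    (J : Matrix (Fin 2) (Fin 2) ℝ) (hJ : J = !![0, -1; 1, 0])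
    (i : ℝ → Fin 2 → ℝ) (q q' : ℝ → ℝ) (u : ℝ → Fin 2 → ℝ)
    (hq : ∀ t : ℝ, HasDerivAt q (q' t) t)
    (lam : ℝ → Fin 2 → ℝ)
    (hlam : ∀ t : ℝ,
      lam t = L • i t + lm • ![Real.cos (np * q t), Real.sin (np * q t)])
    (hfaraday : ∀ t : ℝ, 0 ≤ t → HasDerivAt lam (-R • i t + u t) t)
    (χ : ℝ → Fin 2 → ℝ)
    (hχ : ∀ t : ℝ, HasDerivAt χ (-R • i t + u t) t)
    (θ : Fin 2 → ℝ) (hθ : θ = lam 0 - χ 0) :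
    ∀ t : ℝ, 0 ≤ t →
      HasDerivAt i
        ((1 / L) • (-R • i t + u t - (np * q' t) • (J *ᵥ (χ t + θ - L • i t)))) t := by
  intro t ht
  have hflux : χ t + θ = lam t := by
    rw [hθ, ← sub_eq_sub_of_hasDerivAt_eq hfaraday (fun s _ => hχ s) ht]
    abel
  have hmagnet : χ t + θ - L • i t = lm • ![cos (np * q t), sin (np * q t)] := by
    rw [hflux, hlam, add_sub_cancel_left]
  have hrot := (HasDerivAt.cos_sin ((hq t).const_mul np)).const_smul lm
  refine (HasDerivAt.of_smul_add_left hL.ne' hlam (hfaraday t ht) hrot).congr_deriv ?_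
  rw [one_div, hmagnet, hJ, mulVec_smul, smul_comm]

/-- **Dynamic linear regression form for the PMSM currents (equation (27) of the paper).**
With flux `λ(t) = L i(t) + λ_m (cos(n_p q(t)), sin(n_p q(t)))`, Faraday's law
`λ̇ = −R i + u`, dynamic extension `χ̇ = −R i + u`, and `θ := λ(0) − χ(0)`, one has for all
`t ≥ 0` that `i'(t) = (1/L)[−R i(t) + u(t) − n_p q̇(t) · J(χ(t) + θ − L i(t))]`,
where `J = [[0,−1],[1,0]]`; in particular `i'(t)` is affine in `θ` with regressor matrix
`−(n_p q̇(t)/L) J`. -/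
theorem stmt11 (L R lm np : ℝ) (hL : 0 < L) (hR : 0 ≤ R) (hlm : 0 < lm) (hnp : 0 < np)
    (J : Matrix (Fin 2) (Fin 2) ℝ) (hJ : J = !![0, -1; 1, 0])
    (i : ℝ → Fin 2 → ℝ) (q q' : ℝ → ℝ) (u : ℝ → Fin 2 → ℝ) (hu : Continuous u)
    (hq : ∀ t : ℝ, HasDerivAt q (q' t) t)
    (lam : ℝ → Fin 2 → ℝ)
    (hlam : ∀ t : ℝ,
      lam t = L • i t + lm • ![Real.cos (np * q t), Real.sin (np * q t)])
    (hfaraday : ∀ t : ℝ, 0 ≤ t → HasDerivAt lam (-R • i t + u t) t)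
    (χ : ℝ → Fin 2 → ℝ)
    (hχ : ∀ t : ℝ, HasDerivAt χ (-R • i t + u t) t)
    (θ : Fin 2 → ℝ) (hθ : θ = lam 0 - χ 0) :
    ∀ t : ℝ, 0 ≤ t →
      HasDerivAt i
        ((1 / L) • (-R • i t + u t - (np * q' t) • (J *ᵥ (χ t + θ - L • i t)))) t :=
  stmt11_general L R lm np hL J hJ i q q' u hq lam hlam hfaraday χ hχ θ hθ
end

section
/- Let L1, C2, L3, C4, E, G > 0 and let u : ℝ → (0,1) be continuous. Let i1, v2, i3, v4 : ℝ → ℝ be differentiable and satisfy the Ćuk converter dynamics L1 i1' = −(1−u)v2 + E, C2 v2' = (1−u)i1 + u i3, L3 i3' = −u v2 − v4, C4 v4' = i3 − G v4. Set y := (v2, v4), x := (i1, i3), and let χ : ℝ → ℝ² be differentiable with χ1' = −(1−u)y1/L1 + E/L1 and χ2' = −u y1/L3 − y2/L3. Set θ := x(0) − χ(0). Then for all t ≥ 0: y1'(t) = (1−u(t))(χ1(t)+θ1)/C2 + u(t)(χ2(t)+θ2)/C2 and y2'(t) = (χ2(t)+θ2)/C4 − G y2(t)/C4; i.e., ẏ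 = Φ0(χ,y,u) + Φ1(u)θ with Φ0(χ,y,u) = ((1−u)χ1/C2 + uχ2/C2, χ2/C4 − G y2/C4) and Φ1(u) = [[(1−u)/C2, u/C2], [0, 1/C4]]. -/
theorem eq_add_sub_of_hasDerivAt_eq {𝕜 F : Type*} [RCLike 𝕜] [NormedAddCommGroup F]
    [NormedSpace 𝕜 F] {f g d : 𝕜 → F} (hf : ∀ t, HasDerivAt f (d t) t)
    (hg : ∀ t, HasDerivAt g (d t) t) (a t : 𝕜) : f t = g t + (f a - g a) := by
  have hfg : ∀ s, HasDerivAt (f - g) 0 s := fun s => by simpa using (hf s).sub (hg s)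
  exact eq_add_of_sub_eq' <|
    is_const_of_deriv_eq_zero (fun s => (hfg s).differentiableAt) (fun s => (hfg s).deriv) t a

theorem stmt12_general (L1 C2 L3 C4 E G : ℝ)
    (u : ℝ → ℝ)
    (i1 v2 i3 v4 : ℝ → ℝ)
    (hi1 : ∀ t, HasDerivAt i1 ((-(1 - u t) * v2 t + E) / L1) t)
    (hv2 : ∀ t, HasDerivAt v2 (((1 - u t) * i1 t + u t * i3 t) / C2) t)
    (hi3 : ∀ t, HasDerivAt i3 ((-(u t) * v2 t - v4 t) / L3) t)
    (hv4 : ∀ t, HasDerivAt v4 ((i3 t - G * v4 t) / C4) t)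
    (χ1 χ2 : ℝ → ℝ)
    (hχ1 : ∀ t, HasDerivAt χ1 (-(1 - u t) * v2 t / L1 + E / L1) t)
    (hχ2 : ∀ t, HasDerivAt χ2 (-(u t) * v2 t / L3 - v4 t / L3) t)
    (θ1 θ2 : ℝ) (hθ1 : θ1 = i1 0 - χ1 0) (hθ2 : θ2 = i3 0 - χ2 0) :
    ∀ t : ℝ, 0 ≤ t →
      HasDerivAt v2 ((1 - u t) * (χ1 t + θ1) / C2 + u t * (χ2 t + θ2) / C2) t ∧
      HasDerivAt v4 ((χ2 t + θ2) / C4 - G * v4 t / C4) t := by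
  intro t _
  -- `χ` integrates exactly the right-hand side of `ẋ`, so `x − χ` stays equal to `θ`.
  have hx1 : i1 t = χ1 t + θ1 := hθ1 ▸
    eq_add_sub_of_hasDerivAt_eq hi1 (fun s => (hχ1 s).congr_deriv (by ring)) 0 t
  have hx3 : i3 t = χ2 t + θ2 := hθ2 ▸
    eq_add_sub_of_hasDerivAt_eq hi3 (fun s => (hχ2 s).congr_deriv (by ring)) 0 t
  exact ⟨(hv2 t).congr_deriv (by rw [hx1, hx3]; ring), (hv4 t).congr_deriv (by rw [hx3]; ring)⟩

/-- **Linear regression form for the Ćuk converter, measurement Case I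
(voltages `y = (v2, v4)` measured, currents `x = (i1, i3)` observed).**
Along trajectories of `L1 i1' = −(1−u)v2 + E`, `C2 v2' = (1−u)i1 + u i3`,
`L3 i3' = −u v2 − v4`, `C4 v4' = i3 − G v4`, with the dynamic extension
`χ1' = (−(1−u)y1 + E)/L1`, `χ2' = (−u y1 − y2)/L3` and `θ := x(0) − χ(0)`, one has
`y1' = (1−u)(χ1+θ1)/C2 + u(χ2+θ2)/C2` and `y2' = (χ2+θ2)/C4 − G y2/C4` for all `t ≥ 0`,
i.e. `ẏ = Φ0(χ,y,u) + Φ1(u)θ`. -/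
theorem stmt12 (L1 C2 L3 C4 E G : ℝ)
    (hL1 : 0 < L1) (hC2 : 0 < C2) (hL3 : 0 < L3) (hC4 : 0 < C4) (hE : 0 < E) (hG : 0 < G)
    (u : ℝ → ℝ) (hu : Continuous u) (hu01 : ∀ t, u t ∈ Set.Ioo (0 : ℝ) 1)
    (i1 v2 i3 v4 : ℝ → ℝ)
    (hi1 : ∀ t, HasDerivAt i1 ((-(1 - u t) * v2 t + E) / L1) t)
    (hv2 : ∀ t, HasDerivAt v2 (((1 - u t) * i1 t + u t * i3 t) / C2) t)
    (hi3 : ∀ t, HasDerivAt i3 ((-(u t) * v2 t - v4 t) / L3) t)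
    (hv4 : ∀ t, HasDerivAt v4 ((i3 t - G * v4 t) / C4) t)
    (χ1 χ2 : ℝ → ℝ)
    (hχ1 : ∀ t, HasDerivAt χ1 (-(1 - u t) * v2 t / L1 + E / L1) t)
    (hχ2 : ∀ t, HasDerivAt χ2 (-(u t) * v2 t / L3 - v4 t / L3) t)
    (θ1 θ2 : ℝ) (hθ1 : θ1 = i1 0 - χ1 0) (hθ2 : θ2 = i3 0 - χ2 0) :
    ∀ t : ℝ, 0 ≤ t →
      HasDerivAt v2 ((1 - u t) * (χ1 t + θ1) / C2 + u t * (χ2 t + θ2) / C2) t ∧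
      HasDerivAt v4 ((χ2 t + θ2) / C4 - G * v4 t / C4) t :=
  stmt12_general L1 C2 L3 C4 E G u i1 v2 i3 v4 hi1 hv2 hi3 hv4 χ1 χ2 hχ1 hχ2 θ1 θ2 hθ1 hθ2
end

section
/- Let L1, C2, L3, C4, E, G > 0 and let u : ℝ → (0,1) be continuous. Let i1, v2, i3, v4 : ℝ → ℝ be differentiable and satisfy the Ćuk converter dynamics L1 i1' = −(1−u)v2 + E, C2 v2' = (1−u)i1 + u i3, L3 i3' = −u v2 − v4, C4 v4' = i3 − G v4. Set y := (v2, i3) and x := (i1, v4), and define z(t) := (x1(t), x2(t) − (G L3/C4) y2(t)). Then for all t ≥ 0: z1'(t) = −(1−u(t))y1(t)/L1 + E/L1 and z2'(t) = y2(t)/C4 + (G/C4) u(t) y1(t); in particular ż depends only on y and u. -/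
/-- **Partial change of coordinates for the Ćuk converter, measurement Case II
(`y = (v2, i3)` measured, `x = (i1, v4)` observed).**
Along trajectories of `L1 i1' = −(1−u)v2 + E`, `C2 v2' = (1−u)i1 + u i3`,
`L3 i3' = −u v2 − v4`, `C4 v4' = i3 − G v4`, the curve
`z(t) := (i1(t), v4(t) − (G L3/C4) i3(t))` satisfies
`z1' = −(1−u)y1/L1 + E/L1` and `z2' = y2/C4 + (G/C4) u y1`; in particular `ż` depends only
on `y` and `u`. -/
theorem stmt14 (L1 C2 L3 C4 E G : ℝ)
    (hL1 : 0 < L1) (hC2 : 0 < C2) (hL3 : 0 < L3) (hC4 : 0 < C4) (hE : 0 < E) (hG : 0 < G)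
    (u : ℝ → ℝ) (hu : Continuous u) (hu01 : ∀ t, u t ∈ Set.Ioo (0 : ℝ) 1)
    (i1 v2 i3 v4 : ℝ → ℝ)
    (hi1 : ∀ t, HasDerivAt i1 ((-(1 - u t) * v2 t + E) / L1) t)
    (hv2 : ∀ t, HasDerivAt v2 (((1 - u t) * i1 t + u t * i3 t) / C2) t)
    (hi3 : ∀ t, HasDerivAt i3 ((-(u t) * v2 t - v4 t) / L3) t)
    (hv4 : ∀ t, HasDerivAt v4 ((i3 t - G * v4 t) / C4) t) :
    ∀ t : ℝ,
      HasDerivAt (fun τ => i1 τ) (-(1 - u t) * v2 t / L1 + E / L1) t ∧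
      HasDerivAt (fun τ => v4 τ - (G * L3 / C4) * i3 τ)
        (i3 t / C4 + (G / C4) * (u t * v2 t)) t := by
  intro t
  constructor
  · have h := hi1 t
    have : (-(1 - u t) * v2 t + E) / L1 = -(1 - u t) * v2 t / L1 + E / L1 := by ring
    rw [this] at h
    exact h
  · have h := (hv4 t).sub ((hi3 t).const_mul (G * L3 / C4))
    have heq : (i3 t - G * v4 t) / C4 - G * L3 / C4 * ((-(u t) * v2 t - v4 t) / L3)
        = i3 t / C4 + (G / C4) * (u t * v2 t) := by
      field_simp
      ring
    rw [heq] at h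
    exact h
end
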